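/- arXiv:2508.13824 — 2 statements merged into one kernel-verified Lean document; each statement's English description precedes it below -/
import Mathlib

section
/- If the matrix κ is invertible, then Σ_{q=0}^{N} (κ⁻¹)_{pq} ψ_q = 1 for every p, and Σ_{p=0}^{N} (κ⁻¹)_{pq} ψ̃_p = 1 for every q. Equivalently, κ⁻¹ ψ is the all-ones vector and (κ⁻¹)ᵀ ψ̃ is the all-ones vector. -/
/-!
The Lagrange basis is a partition of unity, `∑ p, φ p = 1`, hence `∑ p, φ p' = 0`. Summing
`κ p q = ψ̃ p ψ̃ q - ∫₀¹ φ p' φ q` over `q` gives `ψ̃ p - (φ p 1 - φ p 0) = ψ p`, and summing over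
`p` gives `ψ̃ q`; that is, `κ 𝟙 = ψ` and `𝟙ᵀ κ = ψ̃ᵀ`, and multiplying by `κ⁻¹` gives the claim.
-/

open Polynomial Matrix

namespace Matrix

variable {n α : Type*} [Fintype n] [DecidableEq n] [CommRing α] {A : Matrix n n α} {v w : n → α}

theorem nonsing_inv_mulVec_of_mulVec_eq (hA : IsUnit A.det) (h : A *ᵥ v = w) :
    A⁻¹ *ᵥ w = v := by
  rw [← h, mulVec_mulVec, nonsing_inv_mul A hA, one_mulVec]

theorem vecMul_nonsing_inv_of_vecMul_eq (hA : IsUnit A.det) (h : v ᵥ* A = w) :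
    w ᵥ* A⁻¹ = v := by
  rw [← h, vecMul_vecMul, mul_nonsing_inv A hA, vecMul_one]

end Matrix

namespace Lagrange

variable {F ι : Type*} [Field F] [DecidableEq ι]

theorem eval_basis (s : Finset ι) (v : ι → F) (i : ι) (x : F) :
    (Lagrange.basis s v i).eval x = ∏ j ∈ s.erase i, (x - v j) / (v i - v j) := by
  rw [Lagrange.basis, eval_prod]
  refine Finset.prod_congr rfl fun j _ => ?_
  simp [basisDivisor, div_eq_inv_mul, mul_comm]

theorem sum_eval_basis {s : Finset ι} {v : ι → F} (hvs : Set.InjOn v s) (hs : s.Nonempty)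
    (x : F) : ∑ i ∈ s, (Lagrange.basis s v i).eval x = 1 := by
  rw [← eval_finsetSum, sum_basis hvs hs, eval_one]

end Lagrange

theorem ContDiff.intervalIntegrable_deriv_mul {f g : ℝ → ℝ} (hf : ContDiff ℝ 1 f)
    (hg : Continuous g) (a b : ℝ) :
    IntervalIntegrable (fun x => deriv f x * g x) MeasureTheory.volume a b :=
  ((hf.continuous_deriv le_rfl).mul hg).intervalIntegrable a b

section PartitionOfUnity

variable {ι : Type*} [Fintype ι] {f : ι → ℝ → ℝ}

theorem sum_deriv_eq_zero_of_sum_eq_one (hf : ∀ i, Differentiable ℝ (f i))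
    (hsum : ∀ x, ∑ i, f i x = 1) (x : ℝ) : ∑ i, deriv (f i) x = 0 := by
  have hsum_fun : ∑ i, f i = fun _ => 1 :=
    funext fun y => (Finset.sum_apply y _ _).trans (hsum y)
  rw [← deriv_sum fun i _ => (hf i).differentiableAt, hsum_fun, deriv_const]

theorem sum_integral_deriv_mul_right_eq_sub (hf : ∀ i, ContDiff ℝ 1 (f i))
    (hsum : ∀ x, ∑ i, f i x = 1) (i : ι) (a b : ℝ) :
    ∑ j, ∫ x in a..b, deriv (f i) x * f j x = f i b - f i a := by
  rw [← intervalIntegral.integral_finsetSum fun j _ =>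
    (hf i).intervalIntegrable_deriv_mul (hf j).continuous a b]
  simp only [← Finset.mul_sum, hsum, mul_one]
  exact intervalIntegral.integral_deriv_eq_sub
    (fun x _ => ((hf i).differentiable one_ne_zero).differentiableAt)
    (((hf i).continuous_deriv le_rfl).intervalIntegrable a b)

theorem sum_integral_deriv_mul_left_eq_zero (hf : ∀ i, ContDiff ℝ 1 (f i))
    (hsum : ∀ x, ∑ i, f i x = 1) (j : ι) (a b : ℝ) :
    ∑ i, ∫ x in a..b, deriv (f i) x * f j x = 0 := by
  rw [← intervalIntegral.integral_finsetSum fun i _ =>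
    (hf i).intervalIntegrable_deriv_mul (hf j).continuous a b]
  simp only [← Finset.sum_mul,
    sum_deriv_eq_zero_of_sum_eq_one (fun i => (hf i).differentiable one_ne_zero) hsum, zero_mul]
  exact intervalIntegral.integral_zero

end PartitionOfUnity

noncomputable def aderdgKappa {ι : Type*} (f : ι → ℝ → ℝ) : Matrix ι ι ℝ :=
  Matrix.of fun i j => f i 1 * f j 1 - ∫ x in (0 : ℝ)..1, deriv (f i) x * f j x

section Kappa

variable {ι : Type*} [Fintype ι] {f : ι → ℝ → ℝ}

theorem aderdgKappa_mulVec_one (hf : ∀ i, ContDiff ℝ 1 (f i)) (hsum : ∀ x, ∑ i, f i x = 1) :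
    aderdgKappa f *ᵥ 1 = fun i => f i 0 := by
  funext i
  simp only [aderdgKappa, Matrix.mulVec, dotProduct, Matrix.of_apply, Pi.one_apply, mul_one,
    Finset.sum_sub_distrib, ← Finset.mul_sum, hsum, sum_integral_deriv_mul_right_eq_sub hf hsum]
  ring

theorem one_vecMul_aderdgKappa (hf : ∀ i, ContDiff ℝ 1 (f i)) (hsum : ∀ x, ∑ i, f i x = 1) :
    1 ᵥ* aderdgKappa f = fun j => f j 1 := by
  funext j
  simp only [aderdgKappa, Matrix.vecMul, dotProduct, Matrix.of_apply, Pi.one_apply, one_mul,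
    Finset.sum_sub_distrib, ← Finset.sum_mul, hsum, sum_integral_deriv_mul_left_eq_zero hf hsum]
  ring

end Kappa

/-- If κ is invertible, then κ⁻¹ ψ is the all-ones vector and
(κ⁻¹)ᵀ ψ̃ is the all-ones vector. -/
theorem aderdg_kappa_inv_ones
    (N : ℕ) (τ : Fin (N + 1) → ℝ) (hτ : Function.Injective τ)
    (φ : Fin (N + 1) → ℝ → ℝ)
    (hφ : ∀ p x, φ p x = ∏ k ∈ Finset.univ.erase p, (x - τ k) / (τ p - τ k))
    (ψ ψt : Fin (N + 1) → ℝ)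
    (hψ : ∀ p, ψ p = φ p 0) (hψt : ∀ p, ψt p = φ p 1)
    (κ : Matrix (Fin (N + 1)) (Fin (N + 1)) ℝ)
    (hκ : ∀ p q, κ p q = ψt p * ψt q - ∫ x in (0:ℝ)..1, deriv (φ p) x * φ q x)
    (hinv : IsUnit κ.det) :
    (∀ p, ∑ q, κ⁻¹ p q * ψ q = 1) ∧ (∀ q, ∑ p, κ⁻¹ p q * ψt p = 1) := by
  have hφ_eval : ∀ p, φ p = fun x => (Lagrange.basis Finset.univ τ p).eval x :=
    fun p => funext fun x => by rw [hφ, Lagrange.eval_basis]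
  have hsmooth : ∀ p, ContDiff ℝ 1 (φ p) := fun p => by
    simpa [hφ_eval] using contDiff_aeval (𝕜 := ℝ) (Lagrange.basis Finset.univ τ p) 1
  have hsum : ∀ x, ∑ p, φ p x = 1 := fun x => by
    simpa only [hφ_eval] using Lagrange.sum_eval_basis hτ.injOn Finset.univ_nonempty x
  have hκ_eq : κ = aderdgKappa φ := Matrix.ext fun p q => by
    rw [hκ, hψt, hψt]; rfl
  have hrow : κ⁻¹ *ᵥ ψ = 1 := Matrix.nonsing_inv_mulVec_of_mulVec_eq hinv <| by
    rw [hκ_eq, aderdgKappa_mulVec_one hsmooth hsum, funext hψ]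
  have hcol : ψt ᵥ* κ⁻¹ = 1 := Matrix.vecMul_nonsing_inv_of_vecMul_eq hinv <| by
    rw [hκ_eq, one_vecMul_aderdgKappa hsmooth hsum, funext hψt]
  refine ⟨fun p => congrFun hrow p, fun q => ?_⟩
  simpa only [vecMul, dotProduct, Pi.one_apply, mul_comm] using congrFun hcol q
end

section
/- Assume every weight w_p is nonzero, let μ = diag(w_0,…,w_N) and α = μ⁻¹ κ. Then the nonlinear-stability matrix Q := μα + αᵀμ − αᵀ w wᵀ α is the dyadic square of the left boundary vector: Q_{pq} = ψ_p ψ_q for all p, q, i.e. Q = ψ ψᵀ. Consequently Q is symmetric positive semidefinite of rank exactly 1 (since Σ_p ψ_p = 1 forces ψ ≠ 0), and its unique nonzero eigenvalue is Σ_{p=0}^{N} ψ_p². -/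
/-!
With `α = μ⁻¹ κ` one has `μ α = κ`, `αᵀ μ = κᵀ` and `wᵀ α = 𝟙ᵀ κ = ψ̃ᵀ`; the last identity holds
because the Lagrange basis sums to `1`, so the stiffness part of `κ` has zero column sums.
Hence `Q = κ + κᵀ - ψ̃ ψ̃ᵀ`, and integration by parts gives `κ + κᵀ = ψ̃ ψ̃ᵀ + ψ ψᵀ`.
The spectral statements are those of the rank-one matrix `ψ ψᵀ`, where `ψ ≠ 0` since `∑ ψ_p = 1`.
-/

open scoped BigOperators
open Matrix

namespace Matrix

theorem vecMulVec_mulVec_eq_dotProduct_smul {n R : Type*} [Fintype n] [CommSemiring R]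
    (u v x : n → R) : vecMulVec u v *ᵥ x = (v ⬝ᵥ x) • u := by
  rw [vecMulVec_mulVec, op_smul_eq_smul]

variable {n K : Type*} [Fintype n] [Field K]

theorem rank_vecMulVec_of_ne_zero {u v : n → K} (hu : u ≠ 0) (hv : v ≠ 0) :
    (vecMulVec u v).rank = 1 := by
  refine le_antisymm (rank_vecMulVec_le u v) (Nat.one_le_iff_ne_zero.mpr fun h => ?_)
  rw [rank, Submodule.finrank_eq_zero, LinearMap.range_eq_bot] at h
  classical
  exact vecMulVec_ne_zero hu hv (toLin'.injective (by rw [toLin'_apply', h, map_zero]))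

theorem eq_zero_or_eq_dotProduct_of_vecMulVec_mulVec_eq_smul {u v x : n → K} {c : K}
    (hx : x ≠ 0) (h : vecMulVec u v *ᵥ x = c • x) : c = 0 ∨ c = v ⬝ᵥ u := by
  rw [vecMulVec_mulVec_eq_dotProduct_smul] at h
  by_cases hvx : v ⬝ᵥ x = 0
  · rw [hvx, zero_smul, eq_comm, smul_eq_zero] at h
    exact .inl (h.resolve_right hx)
  · have := congrArg (v ⬝ᵥ ·) h
    simp only [dotProduct_smul, smul_eq_mul] at this
    exact .inr (mul_left_cancel₀ hvx (by rw [this, mul_comm])).symm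

variable [DecidableEq n]

theorem diagonal_inv_mul_diagonal {w : n → K} (hw : ∀ i, w i ≠ 0) :
    diagonal w⁻¹ * diagonal w = 1 := by
  rw [diagonal_mul_diagonal, ← diagonal_one]
  exact congrArg diagonal (funext fun i => inv_mul_cancel₀ (hw i))

theorem diagonal_mul_diagonal_inv {w : n → K} (hw : ∀ i, w i ≠ 0) :
    diagonal w * diagonal w⁻¹ = 1 := by
  rw [diagonal_mul_diagonal, ← diagonal_one]
  exact congrArg diagonal (funext fun i => mul_inv_cancel₀ (hw i))

theorem inv_diagonal_of_ne_zero {w : n → K} (hw : ∀ i, w i ≠ 0) :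
    (diagonal w)⁻¹ = diagonal w⁻¹ :=
  inv_eq_left_inv (diagonal_inv_mul_diagonal hw)

def stabilityMatrix (w : n → K) (α : Matrix n n K) : Matrix n n K :=
  diagonal w * α + αᵀ * diagonal w - αᵀ * vecMulVec w w * α

theorem stabilityMatrix_inv_diagonal_mul {w c : n → K} {κ : Matrix n n K} (hw : ∀ i, w i ≠ 0)
    (hκ : 1 ᵥ* κ = c) :
    stabilityMatrix w ((diagonal w)⁻¹ * κ) = κ + κᵀ - vecMulVec c c := by
  set α := diagonal w⁻¹ * κ
  have hμα : diagonal w * α = κ := by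
    rw [← Matrix.mul_assoc, diagonal_mul_diagonal_inv hw, Matrix.one_mul]
  have hαμ : αᵀ * diagonal w = κᵀ := by
    rw [transpose_mul, diagonal_transpose, Matrix.mul_assoc, diagonal_inv_mul_diagonal hw,
      Matrix.mul_one]
  have hwα : w ᵥ* α = c := by
    have hw1 : w ᵥ* diagonal w⁻¹ = 1 := funext fun i => by
      rw [vecMul_diagonal, Pi.inv_apply, mul_inv_cancel₀ (hw i), Pi.one_apply]
    rw [← vecMul_vecMul, hw1, hκ]
  have hαwwα : αᵀ * vecMulVec w w * α = vecMulVec c c := by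
    rw [Matrix.mul_assoc, vecMulVec_mul, hwα, mul_vecMulVec, mulVec_transpose, hwα]
  rw [stabilityMatrix, inv_diagonal_of_ne_zero hw, hμα, hαμ, hαwwα]

end Matrix

open Polynomial in
theorem Lagrange.eval_basis_s10 {ι F : Type*} [Field F] [DecidableEq ι] (s : Finset ι) (v : ι → F)
    (i : ι) (x : F) :
    (Lagrange.basis s v i).eval x = ∏ j ∈ s.erase i, (x - v j) / (v i - v j) := by
  rw [Lagrange.basis, eval_prod]
  refine Finset.prod_congr rfl fun j _ => ?_
  simp [Lagrange.basisDivisor, div_eq_inv_mul]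

namespace Polynomial

theorem integral_derivative_mul_add_integral_derivative_mul (f g : ℝ[X]) (a b : ℝ) :
    (∫ x in a..b, f.derivative.eval x * g.eval x) + ∫ x in a..b, g.derivative.eval x * f.eval x
      = f.eval b * g.eval b - f.eval a * g.eval a := by
  have hint (h : ℝ[X]) : IntervalIntegrable (fun x => h.eval x) MeasureTheory.volume a b :=
    h.continuous.intervalIntegrable a b
  rw [← intervalIntegral.integral_add ((hint _).mul_continuousOn g.continuousOn)
    ((hint _).mul_continuousOn f.continuousOn)]
  simpa only [mul_comm (g.derivative.eval _)] using
    intervalIntegral.integral_deriv_mul_eq_sub (fun x _ => f.hasDerivAt x)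
      (fun x _ => g.hasDerivAt x) (hint _) (hint _)

variable {ι : Type*}

noncomputable def aderKappa (P : ι → ℝ[X]) : Matrix ι ι ℝ :=
  Matrix.of fun p q =>
    (P p).eval 1 * (P q).eval 1 - ∫ x in (0 : ℝ)..1, (P p).derivative.eval x * (P q).eval x

theorem one_vecMul_aderKappa [Fintype ι] {P : ι → ℝ[X]} (hP : ∑ i, P i = 1) :
    1 ᵥ* aderKappa P = fun q => (P q).eval 1 := by
  ext q
  have hderiv : ∑ i, (P i).derivative = 0 := by
    rw [← map_sum, hP, derivative_one]
  have hstiff : ∑ i, ∫ x in (0 : ℝ)..1, (P i).derivative.eval x * (P q).eval x = 0 := by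
    have hint (i : ι) : IntervalIntegrable
        (fun x => (P i).derivative.eval x * (P q).eval x) MeasureTheory.volume 0 1 :=
      Continuous.intervalIntegrable (by fun_prop) _ _
    rw [← intervalIntegral.integral_finsetSum fun i _ => hint i]
    simp_rw [← Finset.sum_mul, ← eval_finsetSum, hderiv, eval_zero, zero_mul,
      intervalIntegral.integral_zero]
  simp only [vecMul, one_dotProduct, aderKappa, of_apply]
  rw [Finset.sum_sub_distrib, ← Finset.sum_mul, ← eval_finsetSum, hP, eval_one, one_mul, hstiff,
    sub_zero]

theorem aderKappa_add_transpose (P : ι → ℝ[X]) :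
    aderKappa P + (aderKappa P)ᵀ =
      vecMulVec (fun p => (P p).eval 1) (fun p => (P p).eval 1) +
        vecMulVec (fun p => (P p).eval 0) (fun p => (P p).eval 0) := by
  ext p q
  simp only [aderKappa, Matrix.add_apply, transpose_apply, of_apply, vecMulVec_apply]
  linarith [integral_derivative_mul_add_integral_derivative_mul (P p) (P q) 0 1]

end Polynomial

theorem aderdg_Q_matrix_dyadic_general
    (N : ℕ) (τ : Fin (N + 1) → ℝ) (hτ : Function.Injective τ)
    (φ : Fin (N + 1) → ℝ → ℝ)
    (hφ : ∀ p x, φ p x = ∏ k ∈ Finset.univ.erase p, (x - τ k) / (τ p - τ k))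
    (ψ ψt w : Fin (N + 1) → ℝ)
    (hψ : ∀ p, ψ p = φ p 0) (hψt : ∀ p, ψt p = φ p 1)
    (κ : Matrix (Fin (N + 1)) (Fin (N + 1)) ℝ)
    (hκ : ∀ p q, κ p q = ψt p * ψt q - ∫ x in (0:ℝ)..1, deriv (φ p) x * φ q x)
    (hwne : ∀ p, w p ≠ 0)
    (μ α Q : Matrix (Fin (N + 1)) (Fin (N + 1)) ℝ)
    (hμ : μ = Matrix.diagonal w)
    (hα : α = μ⁻¹ * κ)
    (hQ : Q = μ * α + αᵀ * μ - αᵀ * Matrix.vecMulVec w w * α) :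
    Q = Matrix.vecMulVec ψ ψ ∧
      Q.IsSymm ∧
      Q.PosSemidef ∧
      Q.rank = 1 ∧
      (∀ lam : ℝ, (∃ v : Fin (N + 1) → ℝ, v ≠ 0 ∧ Q.mulVec v = lam • v) →
        lam = 0 ∨ lam = ∑ p, ψ p ^ 2) ∧
      (∃ v : Fin (N + 1) → ℝ, v ≠ 0 ∧ Q.mulVec v = (∑ p, ψ p ^ 2) • v) := by
  set P := Lagrange.basis Finset.univ τ
  have hφP (p : Fin (N + 1)) : φ p = fun x => (P p).eval x :=
    funext fun x => by rw [hφ, Lagrange.eval_basis_s10]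
  have hψP : ψ = fun p => (P p).eval 0 := funext fun p => by rw [hψ, hφP]
  have hψtP : ψt = fun p => (P p).eval 1 := funext fun p => by rw [hψt, hφP]
  have hκP : κ = Polynomial.aderKappa P := by
    ext p q
    simp only [hκ, hψtP, hφP, Polynomial.deriv, Polynomial.aderKappa, of_apply]
  have hsum : ∑ p, P p = 1 := Lagrange.sum_basis hτ.injOn Finset.univ_nonempty
  have hQψ : Q = vecMulVec ψ ψ := by
    rw [hQ, hα, hμ]
    change stabilityMatrix w _ = _
    rw [hκP, stabilityMatrix_inv_diagonal_mul hwne (Polynomial.one_vecMul_aderKappa hsum),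
      Polynomial.aderKappa_add_transpose, hψP]
    abel
  have hψne : ψ ≠ 0 := by
    intro h
    have : ∑ p, ψ p = 1 := by rw [hψP, ← Polynomial.eval_finsetSum, hsum, Polynomial.eval_one]
    simp [h] at this
  have hψψ : ψ ⬝ᵥ ψ = ∑ p, ψ p ^ 2 := by simp only [dotProduct, sq]
  subst hQψ
  refine ⟨rfl, transpose_vecMulVec ψ ψ, by simpa using posSemidef_vecMulVec_self_star ψ,
    rank_vecMulVec_of_ne_zero hψne hψne, fun lam ⟨v, hv, h⟩ => ?_, ψ, hψne, ?_⟩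
  · rw [← hψψ]
    exact eq_zero_or_eq_dotProduct_of_vecMulVec_mulVec_eq_smul hv h
  · rw [vecMulVec_mulVec_eq_dotProduct_smul, hψψ]

/-- The nonlinear-stability matrix Q = μα + αᵀμ − αᵀ w wᵀ α
(with μ = diag(w), α = μ⁻¹ κ) is the dyadic square ψ ψᵀ of the left boundary
vector; hence Q is symmetric positive semidefinite of rank exactly 1, and its
unique nonzero eigenvalue is Σ_p ψ_p². -/
theorem aderdg_Q_matrix_dyadic
    (N : ℕ) (τ : Fin (N + 1) → ℝ) (hτ : Function.Injective τ)
    (φ : Fin (N + 1) → ℝ → ℝ)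
    (hφ : ∀ p x, φ p x = ∏ k ∈ Finset.univ.erase p, (x - τ k) / (τ p - τ k))
    (ψ ψt w : Fin (N + 1) → ℝ)
    (hψ : ∀ p, ψ p = φ p 0) (hψt : ∀ p, ψt p = φ p 1)
    (hw : ∀ p, w p = ∫ x in (0:ℝ)..1, φ p x)
    (κ : Matrix (Fin (N + 1)) (Fin (N + 1)) ℝ)
    (hκ : ∀ p q, κ p q = ψt p * ψt q - ∫ x in (0:ℝ)..1, deriv (φ p) x * φ q x)
    (hwne : ∀ p, w p ≠ 0)
    (μ α Q : Matrix (Fin (N + 1)) (Fin (N + 1)) ℝ)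
    (hμ : μ = Matrix.diagonal w)
    (hα : α = μ⁻¹ * κ)
    (hQ : Q = μ * α + αᵀ * μ - αᵀ * Matrix.vecMulVec w w * α) :
    Q = Matrix.vecMulVec ψ ψ ∧
      Q.IsSymm ∧
      Q.PosSemidef ∧
      Q.rank = 1 ∧
      (∀ lam : ℝ, (∃ v : Fin (N + 1) → ℝ, v ≠ 0 ∧ Q.mulVec v = lam • v) →
        lam = 0 ∨ lam = ∑ p, ψ p ^ 2) ∧
      (∃ v : Fin (N + 1) → ℝ, v ≠ 0 ∧ Q.mulVec v = (∑ p, ψ p ^ 2) • v) :=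
  aderdg_Q_matrix_dyadic_general N τ hτ φ hφ ψ ψt w hψ hψt κ hκ hwne μ α Q hμ hα hQ
end
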